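/- arXiv:0712.1097 — 6 statements merged into one kernel-verified Lean document; each statement's English description precedes it below -/
import Mathlib

section
/- For every CNF formula consisting of m nonempty clauses there is an assignment satisfying at least half of the clauses: if C : Fin m → Clause is a family of clauses with C i nonempty for every i, then there exists an assignment α : V → Bool such that m ≤ 2 · |{ i : Fin m | α satisfies C i }|. In particular MaxSat(C) ≥ ⌈m/2⌉. -/
attribute [local instance] Classical.propDecidable

/-- A clause is a finite set of literals; a literal is a pair (variable, polarity). -/
abbrev Clause (V : Type*) := Finset (V × Bool)

/-- An assignment satisfies a clause iff it satisfies at least one of its literals. -/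
def SatClause {V : Type*} (α : V → Bool) (ω : Clause V) : Prop :=
  ∃ l ∈ ω, α l.1 = l.2

/-- The number of clauses of the CNF formula `C` satisfied by the assignment `α`. -/
noncomputable def numSat {V : Type*} {m : ℕ} (C : Fin m → Clause V) (α : V → Bool) : ℕ :=
  (Finset.univ.filter (fun i => SatClause α (C i))).card

/-- `MaxSat(C)`: the maximum, over all assignments `α`, of the number of satisfied clauses. -/
noncomputable def maxSat {V : Type*} {m : ℕ} (C : Fin m → Clause V) : ℕ :=
  sSup { n | ∃ α : V → Bool, n = numSat C α }

/-- For every CNF formula consisting of `m` nonempty clauses there is an assignment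
satisfying at least half of the clauses; in particular `MaxSat(C) ≥ ⌈m/2⌉`. -/
theorem stmt0 {V : Type*} {m : ℕ} (C : Fin m → Clause V)
    (hne : ∀ i, (C i).Nonempty) :
    (∃ α : V → Bool, m ≤ 2 * numSat C α) ∧ (m + 1) / 2 ≤ maxSat C := by
  classical
  set A : V → Bool := fun _ => true with hA
  set B : V → Bool := fun _ => false with hB
  have hunion : (Finset.univ : Finset (Fin m)) ⊆
      (Finset.univ.filter (fun i => SatClause A (C i))) ∪
      (Finset.univ.filter (fun i => SatClause B (C i))) := by
    intro i _
    obtain ⟨⟨v, p⟩, hmem⟩ := hne i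
    rcases Bool.eq_false_or_eq_true p with hp | hp
    · exact Finset.mem_union_left _ (Finset.mem_filter.mpr
        ⟨Finset.mem_univ i, ⟨(v, p), hmem, by simp [hA, hp]⟩⟩)
    · exact Finset.mem_union_right _ (Finset.mem_filter.mpr
        ⟨Finset.mem_univ i, ⟨(v, p), hmem, by simp [hB, hp]⟩⟩)
  have hsum : m ≤ numSat C A + numSat C B := by
    calc m = (Finset.univ : Finset (Fin m)).card := by simp
    _ ≤ _ := le_trans (Finset.card_le_card hunion) (Finset.card_union_le _ _)
  have hmain : ∃ α : V → Bool, m ≤ 2 * numSat C α := by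
    rcases le_total (numSat C A) (numSat C B) with h | h
    · exact ⟨B, by omega⟩
    · exact ⟨A, by omega⟩
  refine ⟨hmain, ?_⟩
  obtain ⟨α, hα⟩ := hmain
  have hle : (m + 1) / 2 ≤ numSat C α := by omega
  have hbdd : BddAbove { n | ∃ α : V → Bool, n = numSat C α } := by
    refine ⟨m, fun n hn => ?_⟩
    obtain ⟨β, rfl⟩ := hn
    simpa [numSat] using Finset.card_filter_le Finset.univ (fun i => SatClause β (C i))
  exact le_trans hle (le_csSup hbdd ⟨α, rfl⟩)
end

section
/- (Proposition 4, counting form: the number of iterations of Fu&Malik's algorithm is O(m).) Let C : Fin m → Clause be a CNF formula with m clauses. Suppose B : Fin T → Finset V is a family of pairwise disjoint finite sets of blocking variables (B t being the blocking variables introduced at iteration t+1), and cl : V → Fin m associates each blocking variable with the clause it was added to. Let α : V → Bool be an assignment such that (i) for each t : Fin T, exactly one variable of B t is assigned true by α, and (ii) for each clause index i : Fin m, at most one variable v ∈ ⋃_t B t with cl v = i is assigned true by α. Then T ≤ m. -/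
attribute [local instance] Classical.propDecidable

/-- Proposition 4, counting form: if `B t` are the pairwise disjoint sets of blocking
variables introduced at the `T` iterations, `cl` maps each blocking variable to its clause,
`α` sets exactly one variable of each `B t` to true, and for each clause at most one of its
blocking variables is true, then `T ≤ m`. -/
theorem stmt4 {V : Type*} {m T : ℕ} (C : Fin m → Clause V)
    (B : Fin T → Finset V)
    (hdisj : ∀ t t' : Fin T, t ≠ t' → Disjoint (B t) (B t'))
    (cl : V → Fin m) (α : V → Bool)
    (hone : ∀ t : Fin T, ((B t).filter (fun v => α v = true)).card = 1)
    (hclause : ∀ i : Fin m,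
      (((Finset.univ.biUnion B).filter (fun v => α v = true ∧ cl v = i))).card ≤ 1) :
    T ≤ m := by
  -- pick the unique true variable in each B t
  have hpick : ∀ t : Fin T, ∃ v, (B t).filter (fun v => α v = true) = {v} := by
    intro t
    exact Finset.card_eq_one.mp (hone t)
  choose f hf using hpick
  have hfmem : ∀ t, f t ∈ B t ∧ α (f t) = true := by
    intro t
    have : f t ∈ (B t).filter (fun v => α v = true) := by
      rw [hf t]; exact Finset.mem_singleton_self _
    simpa using this
  have hinj : Function.Injective (fun t => cl (f t)) := by
    intro t t' h
    by_contra hne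
    have h1 : f t ∈ (Finset.univ.biUnion B).filter
        (fun v => α v = true ∧ cl v = cl (f t)) := by
      exact Finset.mem_filter.mpr ⟨Finset.mem_biUnion.mpr ⟨t, Finset.mem_univ _, (hfmem t).1⟩,
        (hfmem t).2, rfl⟩
    have h2 : f t' ∈ (Finset.univ.biUnion B).filter
        (fun v => α v = true ∧ cl v = cl (f t)) := by
      exact Finset.mem_filter.mpr ⟨Finset.mem_biUnion.mpr ⟨t', Finset.mem_univ _, (hfmem t').1⟩,
        (hfmem t').2, h.symm⟩
    have hne' : f t ≠ f t' := by
      intro he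
      exact (Finset.disjoint_left.mp (hdisj t t' hne) (hfmem t).1) (he ▸ (hfmem t').1)
    have : 2 ≤ ((Finset.univ.biUnion B).filter
        (fun v => α v = true ∧ cl v = cl (f t))).card :=
      Finset.one_lt_card.mpr ⟨f t, h1, f t', h2, hne'⟩
    have hc := hclause (cl (f t))
    omega
  have := Fintype.card_le_of_injective _ hinj
  simpa using this
end

section
/- (Soundness of the disjoint-core lower bound used in phase 1 of the msu3 algorithm.) Let C : Fin m → Clause be a CNF formula, and suppose S : Fin k → Finset (Fin m) is a family of pairwise disjoint sets of clause indices such that for each j the subformula { C i | i ∈ S j } is unsatisfiable. Then every assignment α falsifies at least one clause in each S j, and hence MaxSat(C) ≤ m − k. -/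
attribute [local instance] Classical.propDecidable

/-! Each of the `k` disjoint unsatisfiable cores contains a clause falsified by `α`; these
clauses are distinct, so `α` falsifies at least `k` clauses and satisfies at most `m - k`. -/

open Finset Function

theorem Finset.card_le_card_of_pairwiseDisjoint_inter_nonempty {ι β : Type*} [Fintype ι]
    {S : ι → Finset β} {t : Finset β} (hdisj : Pairwise (Disjoint on S))
    (hmeet : ∀ j, (S j ∩ t).Nonempty) : Fintype.card ι ≤ #t := by
  choose f hf using hmeet
  have hf_inj : Injective f := fun j j' hjj' => by
    by_contra hne
    exact disjoint_left.mp (hdisj hne) (mem_inter.mp (hf j)).1 (hjj' ▸ (mem_inter.mp (hf j')).1)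
  rw [← card_univ]
  exact card_le_card_of_injOn f (fun j _ => (mem_inter.mp (hf j)).2) hf_inj.injOn

section

variable {V : Type*} {m : ℕ} (C : Fin m → Clause V) (α : V → Bool)

theorem numSat_add_card_filter_not_satClause :
    numSat C α + #{i | ¬ SatClause α (C i)} = m := by
  rw [numSat, card_filter_add_card_filter_not, card_univ, Fintype.card_fin]

theorem exists_not_satClause_of_unsat {s : Finset (Fin m)}
    (hs : ¬ ∃ α : V → Bool, ∀ i ∈ s, SatClause α (C i)) : ∃ i ∈ s, ¬ SatClause α (C i) := by
  by_contra! h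
  exact hs ⟨α, h⟩

theorem numSat_le_sub_of_disjoint_falsified {k : ℕ} {S : Fin k → Finset (Fin m)}
    (hdisj : Pairwise (Disjoint on S)) (hfals : ∀ j, ∃ i ∈ S j, ¬ SatClause α (C i)) :
    numSat C α ≤ m - k := by
  have hk : k ≤ #{i | ¬ SatClause α (C i)} := by
    simpa using card_le_card_of_pairwiseDisjoint_inter_nonempty (t := {i | ¬ SatClause α (C i)})
      hdisj fun j => by simpa [Finset.Nonempty] using hfals j
  have := numSat_add_card_filter_not_satClause C α
  omega

theorem maxSat_le {n : ℕ} (h : ∀ α : V → Bool, numSat C α ≤ n) : maxSat C ≤ n :=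
  csSup_le' <| by
    rintro _ ⟨α, rfl⟩
    exact h α

end

/-- Soundness of the disjoint-core lower bound: if `S j` are pairwise disjoint sets of clause
indices, each inducing an unsatisfiable subformula, then every assignment falsifies at least
one clause in each `S j`, and hence `MaxSat(C) ≤ m - k`. -/
theorem stmt5 {V : Type*} {m k : ℕ} (C : Fin m → Clause V)
    (S : Fin k → Finset (Fin m))
    (hdisj : ∀ j j' : Fin k, j ≠ j' → Disjoint (S j) (S j'))
    (hunsat : ∀ j : Fin k, ¬ ∃ α : V → Bool, ∀ i ∈ S j, SatClause α (C i)) :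
    (∀ (α : V → Bool) (j : Fin k), ∃ i ∈ S j, ¬ SatClause α (C i)) ∧
    maxSat C ≤ m - k := by
  have hfals (α : V → Bool) (j : Fin k) : ∃ i ∈ S j, ¬ SatClause α (C i) :=
    exists_not_satClause_of_unsat C α (hunsat j)
  exact ⟨hfals, maxSat_le C fun α => numSat_le_sub_of_disjoint_falsified C α hdisj (hfals α)⟩
end

section
/- (Correctness of the relaxed formula with cardinality constraint used by the msu3 algorithm.) Let C : Fin m → Clause be a CNF formula and let k ≤ m. Then the following are equivalent: (a) there exist an assignment α : V → Bool and blocking values b : Fin m → Bool such that |{ i : Fin m | b i = true }| = k and for every i either α satisfies C i or b i = true; (b) MaxSat(C) ≥ m − k. -/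
attribute [local instance] Classical.propDecidable

/-!
An assignment extends to a model of the relaxed formula with exactly `k` blocking variables iff
it falsifies at most `k` clauses: block the falsified clauses and pad with arbitrary further ones
up to `k` (possible as `k ≤ m`). Since the maximum in `MaxSat` is attained, this happens for some
assignment iff `MaxSat(C) ≥ m - k`.
-/

section Blocking

variable {ι : Type*} [Fintype ι]

lemma exists_blocking_card_eq_iff (p : ι → Prop) {k : ℕ} (hk : k ≤ Fintype.card ι) :
    (∃ b : ι → Bool, (Finset.univ.filter fun i => b i = true).card = k ∧ ∀ i, p i ∨ b i = true) ↔
      Fintype.card ι - k ≤ (Finset.univ.filter p).card := by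
  constructor
  · rintro ⟨b, hcard, hcover⟩
    have hunblocked : (Finset.univ.filter fun i => ¬ b i = true) ⊆ Finset.univ.filter p :=
      fun i hi => by
        simp only [Finset.mem_filter, Finset.mem_univ, true_and] at hi ⊢
        exact (hcover i).resolve_right hi
    have hsplit := Finset.card_filter_add_card_filter_not (s := Finset.univ) fun i => b i = true
    rw [hcard, Finset.card_univ] at hsplit
    have := Finset.card_le_card hunblocked
    omega
  · intro hp
    have hsplit := Finset.card_filter_add_card_filter_not (s := Finset.univ) p
    rw [Finset.card_univ] at hsplit
    have hfail : (Finset.univ.filter fun i => ¬ p i).card ≤ k := by omega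
    obtain ⟨T, hfailT, hT⟩ := Finset.exists_superset_card_eq hfail (by simpa using hk)
    refine ⟨fun i => decide (i ∈ T), by simpa using hT, fun i => ?_⟩
    by_cases hi : p i
    · exact Or.inl hi
    · exact Or.inr (by simpa using hfailT (by simpa using hi))

end Blocking

section MaxSat

variable {V : Type*} {m : ℕ}

lemma numSat_le (C : Fin m → Clause V) (α : V → Bool) : numSat C α ≤ m := by
  simpa [numSat] using Finset.card_filter_le Finset.univ fun i => SatClause α (C i)

lemma bddAbove_numSat (C : Fin m → Clause V) : BddAbove { n | ∃ α : V → Bool, n = numSat C α } :=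
  ⟨m, by rintro _ ⟨α, rfl⟩; exact numSat_le C α⟩

lemma exists_numSat_eq_maxSat (C : Fin m → Clause V) : ∃ α, numSat C α = maxSat C := by
  obtain ⟨α, hα⟩ := Nat.sSup_mem (s := { n | ∃ α : V → Bool, n = numSat C α })
    ⟨_, fun _ => true, rfl⟩ (bddAbove_numSat C)
  exact ⟨α, hα.symm⟩

lemma le_maxSat_iff (C : Fin m → Clause V) {n : ℕ} : n ≤ maxSat C ↔ ∃ α, n ≤ numSat C α := by
  refine ⟨fun h => ?_, fun ⟨α, hα⟩ => hα.trans (le_csSup (bddAbove_numSat C) ⟨α, rfl⟩)⟩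
  obtain ⟨α, hα⟩ := exists_numSat_eq_maxSat C
  exact ⟨α, hα ▸ h⟩

end MaxSat

/-- Correctness of the relaxed formula with cardinality constraint used by `msu3`: for `k ≤ m`,
the relaxed formula with exactly `k` true blocking variables is satisfiable iff
`MaxSat(C) ≥ m - k`. -/
theorem stmt6 {V : Type*} {m k : ℕ} (C : Fin m → Clause V) (hk : k ≤ m) :
    (∃ (α : V → Bool) (b : Fin m → Bool),
        (Finset.univ.filter (fun i => b i = true)).card = k ∧
        ∀ i, SatClause α (C i) ∨ b i = true) ↔
      m - k ≤ maxSat C := by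
  rw [le_maxSat_iff]
  refine exists_congr fun α => ?_
  simpa [numSat] using exists_blocking_card_eq_iff (fun i => SatClause α (C i)) (by simpa using hk)
end

section
/- (The value returned by the msu3 algorithm is the MaxSat solution.) For any CNF formula C : Fin m → Clause, the quantity m − MaxSat(C) equals the least natural number k for which there exist an assignment α : V → Bool and blocking values b : Fin m → Bool with exactly k indices i having b i = true, such that α satisfies C i for every i with b i = false. Equivalently, if λ is this least k, then the algorithm's return value m − λ equals MaxSat(C). -/
attribute [local instance] Classical.propDecidable

/-!
An assignment `α` together with blocking values `b` covers every clause iff each clause is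
satisfied by `α` or blocked, so at least `m - numSat C α` clauses are blocked, with equality
when exactly the clauses falsified by `α` are blocked. Minimising over `α` gives
`m - maxSat C` as the least number of blocked clauses.
-/

open Finset

namespace MaxSat

variable {V : Type*} {m : ℕ} (C : Fin m → Clause V)

/-- The `k` for which msu3's relaxed formula (each `C i ∨ b i`, exactly `k` of the `b i` true) is
satisfiable; msu3 returns `m - sInf (blockingCosts C)`. -/
def blockingCosts : Set ℕ :=
  { k | ∃ (α : V → Bool) (b : Fin m → Bool),
    (univ.filter (fun i => b i = true)).card = k ∧ ∀ i, b i = false → SatClause α (C i) }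

theorem numSat_le (α : V → Bool) : numSat C α ≤ m :=
  (card_filter_le _ _).trans_eq (card_fin m)

theorem bddAbove_numSat : BddAbove { n | ∃ α : V → Bool, n = numSat C α } :=
  ⟨m, by rintro _ ⟨α, rfl⟩; exact numSat_le C α⟩

theorem exists_numSat_eq_maxSat : ∃ α : V → Bool, maxSat C = numSat C α :=
  Nat.sSup_mem (s := { n | ∃ α : V → Bool, n = numSat C α }) ⟨numSat C fun _ => true, _, rfl⟩
    (bddAbove_numSat C)

theorem numSat_le_maxSat (α : V → Bool) : numSat C α ≤ maxSat C :=
  le_csSup (bddAbove_numSat C) ⟨α, rfl⟩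

theorem maxSat_le : maxSat C ≤ m := by
  obtain ⟨α, hα⟩ := exists_numSat_eq_maxSat C
  exact hα ▸ numSat_le C α

theorem card_filter_not_satClause (α : V → Bool) :
    (univ.filter (fun i => ¬ SatClause α (C i))).card = m - numSat C α := by
  rw [filter_not, card_sdiff_of_subset (filter_subset _ _), card_univ, Fintype.card_fin, numSat]

theorem sub_numSat_le_card_blocked {α : V → Bool} {b : Fin m → Bool}
    (hsat : ∀ i, b i = false → SatClause α (C i)) :
    m - numSat C α ≤ (univ.filter (fun i => b i = true)).card := by
  rw [← card_filter_not_satClause]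
  refine card_le_card fun i hi => ?_
  simp only [mem_filter, mem_univ, true_and] at hi ⊢
  exact Bool.not_eq_false _ |>.mp (mt (hsat i) hi)

theorem sub_numSat_mem_blockingCosts (α : V → Bool) : m - numSat C α ∈ blockingCosts C := by
  refine ⟨α, fun i => decide (¬ SatClause α (C i)), ?_, fun i hi => ?_⟩
  · simp only [decide_eq_true_eq]
    exact card_filter_not_satClause C α
  · simpa using hi

theorem isLeast_blockingCosts : IsLeast (blockingCosts C) (m - maxSat C) := by
  refine ⟨?_, ?_⟩
  · obtain ⟨α, hα⟩ := exists_numSat_eq_maxSat C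
    exact hα ▸ sub_numSat_mem_blockingCosts C α
  · rintro _ ⟨α, b, rfl, hsat⟩
    exact (Nat.sub_le_sub_left (numSat_le_maxSat C α) m).trans (sub_numSat_le_card_blocked C hsat)

end MaxSat

/-- The value returned by the `msu3` algorithm is the MaxSat solution: `m - MaxSat(C)` is the
least `k` for which some assignment together with exactly `k` true blocking values satisfies
every unblocked clause; equivalently, `m - λ = MaxSat(C)` for this least `λ`. -/
theorem stmt7 {V : Type*} {m : ℕ} (C : Fin m → Clause V) :
    m - maxSat C =
      sInf { k : ℕ | ∃ (α : V → Bool) (b : Fin m → Bool),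
        (Finset.univ.filter (fun i => b i = true)).card = k ∧
        ∀ i, b i = false → SatClause α (C i) } ∧
    m - sInf { k : ℕ | ∃ (α : V → Bool) (b : Fin m → Bool),
        (Finset.univ.filter (fun i => b i = true)).card = k ∧
        ∀ i, b i = false → SatClause α (C i) } = maxSat C := by
  have hinf : sInf (MaxSat.blockingCosts C) = m - maxSat C :=
    (MaxSat.isLeast_blockingCosts C).csInf_eq
  exact ⟨hinf.symm, hinf ▸ Nat.sub_sub_self (MaxSat.maxSat_le C)⟩
end

section
/- (Correctness of the pairwise encoding of the AtMost-1 constraint.) Let b : Fin r → V be an injective family of Boolean variables. An assignment α : V → Bool satisfies every binary clause {(b i, false), (b j, false)} for all i < j if and only if at most one of the variables b 0, …, b (r−1) is assigned true by α, i.e., |{ i : Fin r | α (b i) = true }| ≤ 1. -/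
attribute [local instance] Classical.propDecidable

/-- Correctness of the pairwise encoding of the AtMost-1 constraint: `α` satisfies all the
binary clauses `(¬ b i ∨ ¬ b j)` for `i < j` iff at most one of the variables `b i` is true. -/
theorem stmt8 {V : Type*} {r : ℕ} (b : Fin r → V) (hb : Function.Injective b)
    (α : V → Bool) :
    (∀ i j : Fin r, i < j →
        SatClause α ({(b i, false), (b j, false)} : Clause V)) ↔
      (Finset.univ.filter (fun i => α (b i) = true)).card ≤ 1 := by
  constructor
  · intro h
    rw [Finset.card_le_one]
    intro i hi j hj
    simp only [Finset.mem_filter] at hi hj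
    by_contra hne
    rcases lt_or_gt_of_ne hne with hlt | hlt
    · rcases h i j hlt with ⟨l, hl, hal⟩
      simp only [Finset.mem_insert, Finset.mem_singleton] at hl
      rcases hl with rfl | rfl <;> simp_all
    · rcases h j i hlt with ⟨l, hl, hal⟩
      simp only [Finset.mem_insert, Finset.mem_singleton] at hl
      rcases hl with rfl | rfl <;> simp_all
  · intro h i j hij
    rw [Finset.card_le_one] at h
    by_cases hi : α (b i) = true
    · refine ⟨(b j, false), by simp, ?_⟩
      simp only
      by_contra hj
      have : i = j := h i (by simp [hi]) j (by simpa using hj)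
      exact hij.ne this
    · exact ⟨(b i, false), by simp, by simpa using hi⟩
end
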